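/- Let R be a field and S a quasi-thin association scheme on a finite set X with fixed base vertex x. The Terwilliger algebra T = T_R(x) is a cellular algebra with respect to the involution given by matrix transpose, with cell datum I = {0,1,...,r} partially ordered by 0 < 1, 0 < 2, ..., 0 < r (and 1,...,r pairwise incomparable), M(ℓ) = C_ℓ, and cellular basis {b^ℓ_{ij}}. -/

import Mathlib

set_option synthInstance.maxHeartbeats 1000000
set_option maxHeartbeats 1000000

/-- An association scheme of size `d` on a finite set `X`:
a partition `R_0, …, R_d` of `X × X` into nonempty relations with `R_0` the
diagonal, closed under transposition (`transp`), and with well-defined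
intersection numbers `pnum i j ℓ = p^ℓ_{ij}`. -/
structure AssocScheme (X : Type) [Fintype X] [DecidableEq X] (d : ℕ) where
  rel : Fin (d + 1) → Finset (X × X)
  rel_nonempty : ∀ i, (rel i).Nonempty
  partition : ∀ p : X × X, ∃! i, p ∈ rel i
  diag : ∀ p : X × X, p ∈ rel 0 ↔ p.1 = p.2
  transp : Fin (d + 1) → Fin (d + 1)
  transp_mem : ∀ i p, p ∈ rel (transp i) ↔ (p.2, p.1) ∈ rel i
  pnum : Fin (d + 1) → Fin (d + 1) → Fin (d + 1) → ℕ
  pnum_spec : ∀ i j ℓ, ∀ q ∈ rel ℓ,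
    pnum i j ℓ =
      (Finset.univ.filter (fun z : X => (q.1, z) ∈ rel i ∧ (z, q.2) ∈ rel j)).card

namespace AssocScheme

variable {X : Type} [Fintype X] [DecidableEq X] {d : ℕ}

/-- The valency `k_i := p^0_{i i'}` of the relation `R_i`. -/
def k (S : AssocScheme X d) (i : Fin (d + 1)) : ℕ := S.pnum i (S.transp i) 0

end AssocScheme


/-- The adjacency matrix of the relation `R_i` over a commutative ring `R`. -/
def AssocScheme.adj {X : Type} [Fintype X] [DecidableEq X] {d : ℕ} (S : AssocScheme X d)
    (R : Type) [CommRing R] (i : Fin (d + 1)) : Matrix X X R :=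
  Matrix.of fun x y => if (x, y) ∈ S.rel i then 1 else 0

/-- The dual idempotent `E_i^*(x)` with respect to the base vertex `x`. -/
def AssocScheme.dualIdem {X : Type} [Fintype X] [DecidableEq X] {d : ℕ} (S : AssocScheme X d)
    (R : Type) [CommRing R] (x : X) (i : Fin (d + 1)) : Matrix X X R :=
  Matrix.of fun y z => if y = z ∧ (x, y) ∈ S.rel i then 1 else 0

/-- The Terwilliger algebra `T_R(x)`: the subalgebra of `M_X(R)` generated by the
adjacency matrices and the dual idempotents with respect to `x`. -/
def AssocScheme.terwilliger {X : Type} [Fintype X] [DecidableEq X] {d : ℕ}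
    (S : AssocScheme X d) (R : Type) [CommRing R] (x : X) :
    Subalgebra R (Matrix X X R) :=
  Algebra.adjoin R (Set.range (S.adj R) ∪ Set.range (S.dualIdem R x))

/-- The neighbourhood `xR_i = {y | (x, y) ∈ R_i}`. -/
def AssocScheme.xR {X : Type} [Fintype X] [DecidableEq X] {d : ℕ} (S : AssocScheme X d)
    (x : X) (i : Fin (d + 1)) : Finset X :=
  Finset.univ.filter fun y => (x, y) ∈ S.rel i

/-- The cardinality of the complex product `R_i R_j = {R_ℓ | p^ℓ_{ij} > 0}`. -/
def AssocScheme.cardProd {X : Type} [Fintype X] [DecidableEq X] {d : ℕ}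
    (S : AssocScheme X d) (i j : Fin (d + 1)) : ℕ :=
  ((Finset.univ.filter (fun ℓ : Fin (d + 1) => 0 < S.pnum i j ℓ)).image S.rel).card

/-- `(a, c)` is a bad pair: there are `i_b, j_b, ℓ_b` (`b ∈ [n]`) with `i_0 = a`,
`ℓ_n = c`, `k_{i_b} = k_{ℓ_b} = 2` and `p^{ℓ_b}_{i_b j_b} = 1` for all `b`,
`|R_{i_0'} R_{ℓ_n}| = 1`, and `ℓ_c = i_{c+1}` for all `c ∈ [n-1]`. -/
def AssocScheme.badPair {X : Type} [Fintype X] [DecidableEq X] {d : ℕ}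
    (S : AssocScheme X d) (a c : Fin (d + 1)) : Prop :=
  ∃ (n : ℕ) (i j l : Fin (n + 1) → Fin (d + 1)),
    i 0 = a ∧ l (Fin.last n) = c ∧
    (∀ b : Fin (n + 1), S.k (i b) = 2 ∧ S.k (l b) = 2 ∧ S.pnum (i b) (j b) (l b) = 1) ∧
    S.cardProd (S.transp (i 0)) (l (Fin.last n)) = 1 ∧
    (∀ b : Fin n, l b.castSucc = i b.succ)

/-- The relation `∼` on `A_2`: `i ∼ j` iff `(i, j) ∈ R ∪ S`, where
`R = {(i,j) ∈ A_2 × A_2 : |R_{i'} R_j| = 2}` and `S` is the set of bad pairs. -/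
def AssocScheme.sim {X : Type} [Fintype X] [DecidableEq X] {d : ℕ}
    (S : AssocScheme X d) (i j : Fin (d + 1)) : Prop :=
  S.k i = 2 ∧ S.k j = 2 ∧ (S.cardProd (S.transp i) j = 2 ∨ S.badPair i j)


/-- The basis element `b^ℓ_{ij}` of the Terwilliger algebra of a quasi-thin scheme:
for `ℓ = 0`, `b^0_{ij} = E_i^*(x) J E_j^*(x)`; for `ℓ ≠ 0` (and `i, j ∈ C_ℓ`, so
`xR_i = {y₁ ≺ y₂}` and `xR_j = {z₁ ≺ z₂}`), `b^ℓ_{ij} = E_{y₁ z₁} + E_{y₂ z₂}`,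
realized as the matrix whose `(y, z)`-entry is `1` exactly when `y ∈ xR_i`,
`z ∈ xR_j` and `y, z` occupy the same position in the orderings of `xR_i`, `xR_j`. -/
def AssocScheme.bElem {X : Type} [Fintype X] [DecidableEq X] [LinearOrder X] {d : ℕ}
    (S : AssocScheme X d) (K : Type) [Field K] (x : X) {r : ℕ}
    (l : Fin (r + 1)) (i j : Fin (d + 1)) : Matrix X X K :=
  if l = 0 then
    Matrix.of fun y z => if (x, y) ∈ S.rel i ∧ (x, z) ∈ S.rel j then 1 else 0
  else
    Matrix.of fun y z =>
      if (x, y) ∈ S.rel i ∧ (x, z) ∈ S.rel j ∧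
          ((S.xR x i).filter (fun w => w < y)).card =
            ((S.xR x j).filter (fun w => w < z)).card then 1 else 0


/-!
By quasi-thinness each block `E_i^* A_s E_j^*` of a generator is `0` or `b^0_{ij}`, except when
`k_i = k_j = 2` and `p^j_{is} = 1`: then `R_s` matches the two points of `xR_i` with the two points
of `xR_j`, so the block is `b^ℓ_{ij}` or `b^0_{ij} - b^ℓ_{ij}`, and `i ∼ j` because
`|R_{i'} R_j| = 2`. Since `E_i^*` is `b^0_{ii}` or `b^ℓ_{ii}`, the span of the `b^ℓ_{ij}` contains
the generators of `T`, and it is closed under multiplication by the multiplication table, so it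
is `T`; conversely every `b^ℓ_{ij}` lies in `T`, for a bad pair as a product along its chain. The
`b^ℓ_{ij}` are independent because they live on the disjoint blocks `xR_i × xR_j`, on each of
which `b^0_{ij}` and `b^ℓ_{ij}` differ. Axiom (C3) follows from the multiplication table by
linearity.
-/

namespace Finset

lemma card_filter_pos_eq_two_iff {ι : Type*} [Fintype ι] [DecidableEq ι] (f : ι → ℕ)
    (hf : ∑ i, f i = 2) : #{i | 0 < f i} = 2 ↔ ∃ i, f i = 1 := by
  have hsum : ∑ i with 0 < f i, f i = 2 := by
    rw [← sum_filter_ne_zero] at hf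
    simpa only [Nat.pos_iff_ne_zero] using hf
  have hcard : #{i | 0 < f i} ≤ 2 := by
    rw [card_eq_sum_ones, ← hsum]
    exact sum_le_sum fun i hi => (mem_filter.1 hi).2
  constructor
  · intro h
    obtain ⟨a, b, hab, hP⟩ := card_eq_two.1 h
    have ha : a ∈ ({i | 0 < f i} : Finset ι) := hP ▸ mem_insert_self a {b}
    have hb : b ∈ ({i | 0 < f i} : Finset ι) := hP ▸ mem_insert_of_mem (mem_singleton_self b)
    simp only [mem_filter, mem_univ, true_and] at ha hb
    rw [hP, sum_pair hab] at hsum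
    exact ⟨a, by omega⟩
  · rintro ⟨s, hs⟩
    refine le_antisymm hcard (not_lt.1 fun hlt => ?_)
    have hP : ({i | 0 < f i} : Finset ι) = {s} :=
      eq_singleton_iff_unique_mem.2 ⟨by simp [hs], fun t ht =>
        card_le_one.1 (by omega) t ht s (by simp [hs])⟩
    rw [hP, sum_singleton] at hsum
    omega

lemma sum_ite_and_smul {ι R M : Type*} [DecidableEq ι] [Semiring R] [AddCommMonoid M]
    [Module R M] (s : Finset ι) (g : ι → M) {u : ι} {p : Prop} [Decidable p] (hu : p → u ∈ s)
    (c : R) :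
    ∑ u' ∈ s, (if u' = u ∧ p then c else 0) • g u' = if p then c • g u else 0 := by
  split_ifs with hp
  · simp [hp, hu hp]
  · simp [hp]

section LinearOrder

variable {α : Type*} [LinearOrder α] {s : Finset α} {y z : α}

def rankIn (s : Finset α) (y : α) : ℕ := #{w ∈ s | w < y}

lemma rankIn_lt_rankIn (hy : y ∈ s) (hyz : y < z) : s.rankIn y < s.rankIn z :=
  card_lt_card <| ssubset_iff_of_subset
    (fun _ hw => mem_filter.2 ⟨(mem_filter.1 hw).1, (mem_filter.1 hw).2.trans hyz⟩) |>.2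
    ⟨y, mem_filter.2 ⟨hy, hyz⟩, fun h => lt_irrefl y (mem_filter.1 h).2⟩

lemma rankIn_injOn (s : Finset α) : Set.InjOn s.rankIn s := fun y hy z hz h => by
  rcases lt_trichotomy y z with hyz | rfl | hzy
  · exact absurd h (rankIn_lt_rankIn hy hyz).ne
  · rfl
  · exact absurd h (rankIn_lt_rankIn hz hzy).ne'

lemma rankIn_lt_card (hy : y ∈ s) : s.rankIn y < #s :=
  card_lt_card <| filter_ssubset.2 ⟨y, hy, lt_irrefl y⟩

lemma card_filter_rankIn_eq {n : ℕ} (hn : n < #s) : #{w ∈ s | s.rankIn w = n} = 1 := by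
  obtain ⟨y, hy, hyn⟩ := surjOn_of_injOn_of_card_le s.rankIn (t := range #s)
    (fun y hy => mem_range.2 (rankIn_lt_card hy)) s.rankIn_injOn (by simp) (mem_range.2 hn)
  refine card_eq_one.2 ⟨y, eq_singleton_iff_unique_mem.2 ⟨mem_filter.2 ⟨hy, hyn⟩, ?_⟩⟩
  exact fun w hw => s.rankIn_injOn (mem_filter.1 hw).1 hy ((mem_filter.1 hw).2.trans hyn.symm)

lemma rankIn_eq_zero_iff (hy : y ∈ s) : s.rankIn y = 0 ↔ y = s.min' ⟨y, hy⟩ := by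
  rw [rankIn, card_eq_zero, filter_eq_empty_iff]
  constructor
  · exact fun h => le_antisymm (le_min' _ _ _ fun w hw => not_lt.1 (h hw)) (min'_le s y hy)
  · exact fun h w hw hwy => (min'_le s w hw).not_gt (hwy.trans_eq h)

lemma rankIn_min' (h : s.Nonempty) : s.rankIn (s.min' h) = 0 :=
  (rankIn_eq_zero_iff (min'_mem s h)).2 rfl

lemma rankIn_max'_ne_zero (h : 1 < #s) : s.rankIn (s.max' (card_pos.1 (by omega))) ≠ 0 := by
  rw [Ne, rankIn_eq_zero_iff (max'_mem _ _)]
  exact (min'_lt_max'_of_card s h).ne'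

end LinearOrder

lemma rel_iff_iff_of_card_eq_two {α β : Type*} {s : Finset α} {t : Finset β} (ht : #t = 2)
    {ρ : α → β → Prop} (hrow : ∀ y ∈ s, ∃! z, z ∈ t ∧ ρ y z)
    (hcol : ∀ z ∈ t, ∀ y ∈ s, ∀ y' ∈ s, ρ y z → ρ y' z → y = y')
    {y₀ : α} {z₀ : β} (hy₀ : y₀ ∈ s) (hz₀ : z₀ ∈ t) (h₀ : ρ y₀ z₀)
    {y : α} {z : β} (hy : y ∈ s) (hz : z ∈ t) : ρ y z ↔ (y = y₀ ↔ z = z₀) := by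
  by_cases hyy : y = y₀
  · subst hyy
    simp only [true_iff]
    exact ⟨fun h => (hrow y hy).unique ⟨hz, h⟩ ⟨hz₀, h₀⟩, fun h => h ▸ h₀⟩
  · obtain ⟨z₁, ⟨hz₁, h₁⟩, huniq⟩ := hrow y hy
    have hz₁₀ : z₁ ≠ z₀ := fun e => hyy (hcol z₀ hz₀ y hy y₀ hy₀ (e ▸ h₁) h₀)
    simp only [hyy, false_iff]
    refine ⟨fun h e => hz₁₀ (e ▸ huniq z ⟨hz, h⟩).symm, fun hzz => ?_⟩
    classical
    obtain ⟨a, b, -, hab⟩ := card_eq_two.1 ht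
    simp only [hab, mem_insert, mem_singleton] at hz hz₀ hz₁
    have : z = z₁ := by rcases hz with rfl | rfl <;> rcases hz₀ with rfl | rfl <;>
      rcases hz₁ with rfl | rfl <;> tauto
    exact this ▸ h₁

end Finset

namespace AssocScheme

open Finset Matrix Submodule

section Combinatorics

variable {X : Type} [Fintype X] [DecidableEq X] {d : ℕ} (S : AssocScheme X d)

lemma eq_of_mem_rel {i j : Fin (d + 1)} {p : X × X} (hi : p ∈ S.rel i) (hj : p ∈ S.rel j) :
    i = j :=
  (S.partition p).unique hi hj

lemma rel_injective : Function.Injective S.rel := fun i _ h =>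
  let ⟨_, hp⟩ := S.rel_nonempty i
  S.eq_of_mem_rel hp (h ▸ hp)

@[simp]
lemma mem_xR {x y : X} {i : Fin (d + 1)} : y ∈ S.xR x i ↔ (x, y) ∈ S.rel i := by
  simp [xR]

lemma card_xR_filter_rel_left {x z : X} (i s : Fin (d + 1)) {j : Fin (d + 1)}
    (hz : (x, z) ∈ S.rel j) : #{y ∈ S.xR x i | (y, z) ∈ S.rel s} = S.pnum i s j := by
  rw [S.pnum_spec i s j (x, z) hz, xR, filter_filter]

lemma card_xR_filter_rel_right {x y : X} {i : Fin (d + 1)} (s j : Fin (d + 1))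
    (hy : (x, y) ∈ S.rel i) :
    #{z ∈ S.xR x j | (y, z) ∈ S.rel s} = S.pnum s (S.transp j) (S.transp i) := by
  rw [S.pnum_spec s (S.transp j) (S.transp i) (y, x) ((S.transp_mem i _).2 hy), xR,
    filter_filter]
  simp only [S.transp_mem, and_comm]

lemma card_xR (x : X) (i : Fin (d + 1)) : #(S.xR x i) = S.k i := by
  rw [k, ← S.card_xR_filter_rel_left (x := x) i (S.transp i) ((S.diag (x, x)).2 rfl),
    filter_true_of_mem fun y hy => (S.transp_mem i _).2 ((S.mem_xR).1 hy)]

lemma k_pos (i : Fin (d + 1)) : 0 < S.k i := by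
  obtain ⟨⟨x, y⟩, hxy⟩ := S.rel_nonempty i
  rw [← S.card_xR x, card_pos]
  exact ⟨y, S.mem_xR.2 hxy⟩

lemma xR_nonempty (x : X) (i : Fin (d + 1)) : (S.xR x i).Nonempty :=
  card_pos.1 (S.card_xR x i ▸ S.k_pos i)

lemma pnum_le_k (i s j : Fin (d + 1)) : S.pnum i s j ≤ S.k i := by
  obtain ⟨⟨x, z⟩, hxz⟩ := S.rel_nonempty j
  rw [← S.card_xR_filter_rel_left i s hxz, ← S.card_xR x]
  exact card_filter_le _ _

/-- Both sides count the pairs `(y, z) ∈ xR_i × xR_j` with `(y, z) ∈ R_s`. -/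
lemma k_mul_pnum (i s j : Fin (d + 1)) :
    S.k j * S.pnum i s j = S.k i * S.pnum s (S.transp j) (S.transp i) := by
  obtain ⟨⟨x, -⟩, -⟩ := S.rel_nonempty 0
  have := sum_card_bipartiteAbove_eq_sum_card_bipartiteBelow (s := S.xR x i) (t := S.xR x j)
    (r := fun y z => (y, z) ∈ S.rel s)
  simp only [bipartiteAbove, bipartiteBelow] at this
  rw [sum_congr rfl fun y hy => S.card_xR_filter_rel_right s j (S.mem_xR.1 hy),
    sum_congr rfl fun z hz => S.card_xR_filter_rel_left i s (S.mem_xR.1 hz), sum_const,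
    sum_const, card_xR, card_xR, smul_eq_mul, smul_eq_mul] at this
  exact this.symm

lemma card_filter_mem_rel (p : X × X) : #{s | p ∈ S.rel s} = 1 := by
  obtain ⟨s, hs, hunique⟩ := S.partition p
  rw [card_eq_one]
  exact ⟨s, by ext t; simpa using ⟨hunique t, fun h => h ▸ hs⟩⟩

lemma sum_pnum (i j : Fin (d + 1)) : ∑ s, S.pnum i s j = S.k i := by
  obtain ⟨⟨x, z⟩, hxz⟩ := S.rel_nonempty j
  have := sum_card_bipartiteAbove_eq_sum_card_bipartiteBelow (s := univ) (t := S.xR x i)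
    (r := fun s y => (y, z) ∈ S.rel s)
  simp only [bipartiteAbove, bipartiteBelow, card_filter_mem_rel, sum_const, smul_eq_mul,
    mul_one, card_xR, S.card_xR_filter_rel_left i _ hxz] at this
  exact this

lemma pnum_pos_iff (i j l : Fin (d + 1)) :
    0 < S.pnum i j l ↔
      ∃ a b c, (a, b) ∈ S.rel i ∧ (b, c) ∈ S.rel j ∧ (a, c) ∈ S.rel l := by
  constructor
  · intro h
    obtain ⟨q, hq⟩ := S.rel_nonempty l
    obtain ⟨b, hb⟩ := card_pos.1 (S.pnum_spec i j l q hq ▸ h)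
    exact ⟨q.1, b, q.2, (mem_filter.1 hb).2.1, (mem_filter.1 hb).2.2, hq⟩
  · rintro ⟨a, b, c, hab, hbc, hac⟩
    rw [S.pnum_spec i j l (a, c) hac, card_pos]
    exact ⟨b, mem_filter.2 ⟨mem_univ b, hab, hbc⟩⟩

lemma pnum_transp_pos_iff (i j l : Fin (d + 1)) :
    0 < S.pnum (S.transp i) j l ↔ 0 < S.pnum i l j := by
  simp only [pnum_pos_iff, S.transp_mem]
  exact ⟨fun ⟨a, b, c, h₁, h₂, h₃⟩ => ⟨b, a, c, h₁, h₃, h₂⟩,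
    fun ⟨b, a, c, h₁, h₃, h₂⟩ => ⟨a, b, c, h₁, h₂, h₃⟩⟩

lemma cardProd_transp_eq_two_iff {i : Fin (d + 1)} (hki : S.k i = 2) (j : Fin (d + 1)) :
    S.cardProd (S.transp i) j = 2 ↔ ∃ s, S.pnum i s j = 1 := by
  rw [cardProd, card_image_of_injective _ S.rel_injective,
    filter_congr fun l _ => S.pnum_transp_pos_iff i j l]
  exact card_filter_pos_eq_two_iff _ ((S.sum_pnum i j).trans hki)

end Combinatorics

section Blocks

variable {X : Type} [Fintype X] [DecidableEq X] {d : ℕ} (S : AssocScheme X d)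
  (R : Type) [CommRing R] (x : X)

def allOnesBlock (i j : Fin (d + 1)) : Matrix X X R :=
  of fun y z => if (x, y) ∈ S.rel i ∧ (x, z) ∈ S.rel j then 1 else 0

def matchingBlock [LinearOrder X] (i j : Fin (d + 1)) : Matrix X X R :=
  of fun y z => if (x, y) ∈ S.rel i ∧ (x, z) ∈ S.rel j ∧
    (S.xR x i).rankIn y = (S.xR x j).rankIn z then 1 else 0

lemma dualIdem_eq_diagonal (i : Fin (d + 1)) :
    S.dualIdem R x i = diagonal fun y => if (x, y) ∈ S.rel i then 1 else 0 := by
  ext y z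
  by_cases h : y = z <;> simp [dualIdem, h]

lemma dualIdem_mul_mul_dualIdem_apply (i j : Fin (d + 1)) (M : Matrix X X R) (y z : X) :
    (S.dualIdem R x i * M * S.dualIdem R x j) y z =
      if (x, y) ∈ S.rel i ∧ (x, z) ∈ S.rel j then M y z else 0 := by
  simp only [dualIdem_eq_diagonal, diagonal_mul, mul_diagonal, ite_mul, one_mul, zero_mul,
    mul_ite, mul_one, mul_zero, ite_and]
  split_ifs <;> rfl

lemma sum_ite_mem_rel (p : X × X) : ∑ s, (if p ∈ S.rel s then 1 else 0 : R) = 1 := by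
  rw [sum_boole, card_filter_mem_rel, Nat.cast_one]

lemma sum_dualIdem : ∑ i, S.dualIdem R x i = 1 := by
  ext y z
  by_cases h : y = z <;> simp [Matrix.sum_apply, dualIdem, h, card_filter_mem_rel, one_apply]

lemma dualIdem_mul_adj_mul_dualIdem_apply (i s j : Fin (d + 1)) (y z : X) :
    (S.dualIdem R x i * S.adj R s * S.dualIdem R x j) y z =
      if (x, y) ∈ S.rel i ∧ (x, z) ∈ S.rel j ∧ (y, z) ∈ S.rel s then 1 else 0 := by
  rw [dualIdem_mul_mul_dualIdem_apply]
  simp only [adj, of_apply, ite_and]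

lemma allOnesBlock_eq_sum (i j : Fin (d + 1)) :
    S.allOnesBlock R x i j = ∑ s, S.dualIdem R x i * S.adj R s * S.dualIdem R x j := by
  ext y z
  simp only [Matrix.sum_apply, dualIdem_mul_adj_mul_dualIdem_apply, allOnesBlock, of_apply]
  split_ifs with h
  · simp only [h.1, h.2, true_and]
    exact (S.sum_ite_mem_rel R (y, z)).symm
  · exact (sum_eq_zero fun s _ => if_neg fun h' => h ⟨h'.1, h'.2.1⟩).symm

lemma adj_eq_sum (s : Fin (d + 1)) :
    S.adj R s = ∑ i, ∑ j, S.dualIdem R x i * S.adj R s * S.dualIdem R x j := by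
  simp only [← Finset.mul_sum, ← Finset.sum_mul, sum_dualIdem, one_mul, mul_one]

lemma adj_transpose (s : Fin (d + 1)) : (S.adj R s)ᵀ = S.adj R (S.transp s) := by
  ext y z
  simp [adj, S.transp_mem]

lemma dualIdem_transpose (i : Fin (d + 1)) : (S.dualIdem R x i)ᵀ = S.dualIdem R x i := by
  rw [dualIdem_eq_diagonal, diagonal_transpose]

lemma allOnesBlock_transpose (i j : Fin (d + 1)) :
    (S.allOnesBlock R x i j)ᵀ = S.allOnesBlock R x j i := by
  ext y z
  simp [allOnesBlock, and_comm]

lemma matchingBlock_transpose [LinearOrder X] (i j : Fin (d + 1)) :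
    (S.matchingBlock R x i j)ᵀ = S.matchingBlock R x j i := by
  ext y z
  simp only [matchingBlock, transpose_apply, of_apply]
  exact if_congr ⟨fun ⟨h₁, h₂, h₃⟩ => ⟨h₂, h₁, h₃.symm⟩,
    fun ⟨h₁, h₂, h₃⟩ => ⟨h₂, h₁, h₃.symm⟩⟩ rfl rfl

lemma dualIdem_eq_matchingBlock [LinearOrder X] (i : Fin (d + 1)) :
    S.dualIdem R x i = S.matchingBlock R x i i := by
  ext y z
  simp only [dualIdem, matchingBlock, of_apply]
  refine if_congr ⟨?_, fun ⟨hy, hz, h⟩ => ⟨(S.xR x i).rankIn_injOn (S.mem_xR.2 hy)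
    (S.mem_xR.2 hz) h, hy⟩⟩ rfl rfl
  rintro ⟨rfl, hy⟩
  exact ⟨hy, hy, rfl⟩

lemma dualIdem_eq_allOnesBlock {i : Fin (d + 1)} (hk : S.k i = 1) :
    S.dualIdem R x i = S.allOnesBlock R x i i := by
  ext y z
  simp only [dualIdem, allOnesBlock, of_apply]
  refine if_congr ⟨?_, fun ⟨hy, hz⟩ => ⟨card_le_one.1 (S.card_xR x i ▸ hk.le) y
    (S.mem_xR.2 hy) z (S.mem_xR.2 hz), hy⟩⟩ rfl rfl
  rintro ⟨rfl, hy⟩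
  exact ⟨hy, hy⟩

lemma adj_mem_terwilliger (s : Fin (d + 1)) : S.adj R s ∈ S.terwilliger R x :=
  Algebra.subset_adjoin (Set.mem_union_left _ ⟨s, rfl⟩)

lemma dualIdem_mem_terwilliger (i : Fin (d + 1)) : S.dualIdem R x i ∈ S.terwilliger R x :=
  Algebra.subset_adjoin (Set.mem_union_right _ ⟨i, rfl⟩)

lemma dualIdem_mul_adj_mul_dualIdem_mem_terwilliger (i s j : Fin (d + 1)) :
    S.dualIdem R x i * S.adj R s * S.dualIdem R x j ∈ S.terwilliger R x :=
  mul_mem (mul_mem (S.dualIdem_mem_terwilliger R x i) (S.adj_mem_terwilliger R x s))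
    (S.dualIdem_mem_terwilliger R x j)

lemma allOnesBlock_mem_terwilliger (i j : Fin (d + 1)) :
    S.allOnesBlock R x i j ∈ S.terwilliger R x := by
  rw [allOnesBlock_eq_sum]
  exact sum_mem fun s _ => S.dualIdem_mul_adj_mul_dualIdem_mem_terwilliger R x i s j

lemma transpose_mem_terwilliger {M : Matrix X X R} (hM : M ∈ S.terwilliger R x) :
    Mᵀ ∈ S.terwilliger R x := by
  induction hM using Algebra.adjoin_induction with
  | mem M hM =>
    rcases hM with ⟨s, rfl⟩ | ⟨i, rfl⟩
    · exact adj_transpose S R s ▸ S.adj_mem_terwilliger R x _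
    · exact (dualIdem_transpose S R x i).symm ▸ S.dualIdem_mem_terwilliger R x i
  | algebraMap c =>
    rw [Algebra.algebraMap_eq_smul_one, transpose_smul, transpose_one]
    exact Subalgebra.smul_mem _ (one_mem _) c
  | add M N _ _ hM hN => exact transpose_add M N ▸ add_mem hM hN
  | mul M N _ _ hM hN => exact transpose_mul M N ▸ mul_mem hN hM

lemma allOnesBlock_mul_apply (i j : Fin (d + 1)) (N : Matrix X X R) (y z : X) :
    (S.allOnesBlock R x i j * N) y z =
      if (x, y) ∈ S.rel i then ∑ w ∈ S.xR x j, N w z else 0 := by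
  simp only [mul_apply, allOnesBlock, of_apply, ite_and, ite_mul, one_mul, zero_mul]
  split_ifs
  · rw [xR, sum_filter]
  · exact sum_const_zero

lemma sum_xR_allOnesBlock_apply (j u v : Fin (d + 1)) (z : X) :
    ∑ w ∈ S.xR x j, S.allOnesBlock R x u v w z =
      if j = u ∧ (x, z) ∈ S.rel v then (S.k j : R) else 0 := by
  simp only [allOnesBlock, of_apply]
  by_cases hju : j = u
  · subst hju
    by_cases hz : (x, z) ∈ S.rel v
    · rw [sum_congr rfl fun w hw => if_pos ⟨S.mem_xR.1 hw, hz⟩]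
      simp [card_xR, hz]
    · simp [hz]
  · rw [if_neg fun h => hju h.1]
    exact sum_eq_zero fun w hw => if_neg fun h => hju (S.eq_of_mem_rel (S.mem_xR.1 hw) h.1)

lemma sum_xR_matchingBlock_apply [LinearOrder X] {u v : Fin (d + 1)} (hk : S.k u = S.k v)
    (j : Fin (d + 1)) (z : X) :
    ∑ w ∈ S.xR x j, S.matchingBlock R x u v w z =
      if j = u ∧ (x, z) ∈ S.rel v then 1 else 0 := by
  simp only [matchingBlock, of_apply]
  by_cases hju : j = u
  · subst hju
    by_cases hz : (x, z) ∈ S.rel v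
    · have hlt : (S.xR x v).rankIn z < #(S.xR x j) := by
        rw [card_xR, hk, ← card_xR S x]
        exact rankIn_lt_card (S.mem_xR.2 hz)
      rw [sum_boole, if_pos ⟨rfl, hz⟩, ← Nat.cast_one, ← card_filter_rankIn_eq hlt]
      congr 2
      exact filter_congr fun w hw => by simp [S.mem_xR.1 hw, hz]
    · simp [hz]
  · rw [if_neg fun h => hju h.1]
    exact sum_eq_zero fun w hw => if_neg fun h => hju (S.eq_of_mem_rel (S.mem_xR.1 hw) h.1)

lemma allOnesBlock_mul_allOnesBlock (i j u v : Fin (d + 1)) :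
    S.allOnesBlock R x i j * S.allOnesBlock R x u v =
      if j = u then (S.k j : R) • S.allOnesBlock R x i v else 0 := by
  ext y z
  rw [allOnesBlock_mul_apply, sum_xR_allOnesBlock_apply]
  split_ifs <;> simp_all [allOnesBlock]

lemma allOnesBlock_mul_matchingBlock [LinearOrder X] {u v : Fin (d + 1)} (hk : S.k u = S.k v)
    (i j : Fin (d + 1)) :
    S.allOnesBlock R x i j * S.matchingBlock R x u v =
      if j = u then S.allOnesBlock R x i v else 0 := by
  ext y z
  rw [allOnesBlock_mul_apply, sum_xR_matchingBlock_apply S R x hk]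
  split_ifs <;> simp_all [allOnesBlock]

lemma matchingBlock_mul_allOnesBlock [LinearOrder X] {i j : Fin (d + 1)} (hk : S.k i = S.k j)
    (u v : Fin (d + 1)) :
    S.matchingBlock R x i j * S.allOnesBlock R x u v =
      if j = u then S.allOnesBlock R x i v else 0 := by
  rw [← transpose_transpose (_ * _), transpose_mul, allOnesBlock_transpose,
    matchingBlock_transpose, allOnesBlock_mul_matchingBlock S R x hk.symm]
  by_cases h : j = u
  · rw [if_pos h.symm, if_pos h, allOnesBlock_transpose]
  · rw [if_neg (Ne.symm h), if_neg h, transpose_zero]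

lemma matchingBlock_mul_apply [LinearOrder X] {i j : Fin (d + 1)} (N : Matrix X X R) {y w : X}
    (hy : (x, y) ∈ S.rel i) (hw : (x, w) ∈ S.rel j)
    (hyw : (S.xR x j).rankIn w = (S.xR x i).rankIn y) (z : X) :
    (S.matchingBlock R x i j * N) y z = N w z := by
  rw [mul_apply, sum_eq_single w]
  · simp [matchingBlock, hy, hw, hyw]
  · intro w' _ hw'
    simp only [matchingBlock, of_apply, ite_mul, one_mul, zero_mul]
    exact if_neg fun ⟨_, h, h'⟩ => hw' ((S.xR x j).rankIn_injOn (S.mem_xR.2 h) (S.mem_xR.2 hw)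
      (h'.symm.trans hyw.symm))
  · simp

lemma matchingBlock_mul_matchingBlock [LinearOrder X] {i j : Fin (d + 1)} (hk : S.k i = S.k j)
    (u v : Fin (d + 1)) :
    S.matchingBlock R x i j * S.matchingBlock R x u v =
      if j = u then S.matchingBlock R x i v else 0 := by
  ext y z
  by_cases hy : (x, y) ∈ S.rel i
  · have hlt : (S.xR x i).rankIn y < #(S.xR x j) := by
      rw [card_xR, ← hk, ← card_xR S x]
      exact rankIn_lt_card (S.mem_xR.2 hy)
    obtain ⟨w, hw⟩ := card_eq_one.1 (card_filter_rankIn_eq hlt)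
    have hw' := mem_filter.1 (hw ▸ mem_singleton_self w)
    rw [S.matchingBlock_mul_apply R x _ hy (S.mem_xR.1 hw'.1) hw'.2]
    by_cases hju : j = u
    · subst hju
      simp [matchingBlock, hy, S.mem_xR.1 hw'.1, hw'.2]
    · have : (x, w) ∉ S.rel u := fun h => hju (S.eq_of_mem_rel (S.mem_xR.1 hw'.1) h)
      simp [matchingBlock, hju, this]
  · split_ifs <;> simp [mul_apply, matchingBlock, hy]

lemma dualIdem_mul_adj_mul_dualIdem_of_pnum_eq_zero {i s j : Fin (d + 1)}
    (h : S.pnum i s j = 0) : S.dualIdem R x i * S.adj R s * S.dualIdem R x j = 0 := by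
  ext y z
  rw [dualIdem_mul_adj_mul_dualIdem_apply, Matrix.zero_apply, if_neg]
  rintro ⟨hy, hz, hyz⟩
  rw [← S.card_xR_filter_rel_left i s hz, card_eq_zero] at h
  exact (eq_empty_iff_forall_notMem.1 h) y (mem_filter.2 ⟨S.mem_xR.2 hy, hyz⟩)

lemma dualIdem_mul_adj_mul_dualIdem_of_pnum_eq_k {i s j : Fin (d + 1)}
    (h : S.pnum i s j = S.k i) :
    S.dualIdem R x i * S.adj R s * S.dualIdem R x j = S.allOnesBlock R x i j := by
  ext y z
  rw [dualIdem_mul_adj_mul_dualIdem_apply]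
  refine if_congr ⟨fun h' => ⟨h'.1, h'.2.1⟩, fun ⟨hy, hz⟩ => ⟨hy, hz, ?_⟩⟩ rfl rfl
  rw [← S.card_xR_filter_rel_left i s hz, ← S.card_xR x] at h
  exact filter_card_eq h y (S.mem_xR.2 hy)

/-- `R_s` matches `xR_i` bijectively with `xR_j`, so it is determined by the partner `z₀` of the
least element of `xR_i`. -/
lemma exists_rel_iff_rankIn_of_pnum_eq_one [LinearOrder X] {i s j : Fin (d + 1)}
    (hki : S.k i = 2) (hkj : S.k j = 2) (h : S.pnum i s j = 1) :
    ∃ z₀ ∈ S.xR x j, ∀ y ∈ S.xR x i, ∀ z ∈ S.xR x j, (y, z) ∈ S.rel s ↔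
      ((S.xR x i).rankIn y = 0 ↔ (S.xR x j).rankIn z = (S.xR x j).rankIn z₀) := by
  have hrow : ∀ y ∈ S.xR x i, ∃! z, z ∈ S.xR x j ∧ (y, z) ∈ S.rel s := fun y hy => by
    have := S.k_mul_pnum i s j
    rw [hki, hkj, h, ← S.card_xR_filter_rel_right s j (S.mem_xR.1 hy)] at this
    have h₁ : #{z ∈ S.xR x j | (y, z) ∈ S.rel s} = 1 := by omega
    simpa only [mem_filter] using card_eq_one_iff_existsUnique.1 h₁
  have hcol : ∀ z ∈ S.xR x j, ∀ y ∈ S.xR x i, ∀ y' ∈ S.xR x i,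
      (y, z) ∈ S.rel s → (y', z) ∈ S.rel s → y = y' := fun z hz y hy y' hy' h₁ h₂ =>
    card_le_one.1 (S.card_xR_filter_rel_left i s (S.mem_xR.1 hz) ▸ h.le) y
      (mem_filter.2 ⟨hy, h₁⟩) y' (mem_filter.2 ⟨hy', h₂⟩)
  have hne : (S.xR x i).Nonempty := card_pos.1 (by rw [card_xR]; omega)
  obtain ⟨z₀, ⟨hz₀, h₀⟩, -⟩ := hrow _ ((S.xR x i).min'_mem hne)
  refine ⟨z₀, hz₀, fun y hy z hz => ?_⟩
  rw [rel_iff_iff_of_card_eq_two (S.card_xR x j ▸ hkj) hrow hcol (min'_mem _ hne) hz₀ h₀ hy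
    hz, rankIn_eq_zero_iff hy, (S.xR x j).rankIn_injOn.eq_iff hz hz₀]

lemma rankIn_xR_lt_two [LinearOrder X] {i : Fin (d + 1)} (hk : S.k i = 2) {y : X}
    (hy : (x, y) ∈ S.rel i) : (S.xR x i).rankIn y < 2 :=
  hk ▸ S.card_xR x i ▸ rankIn_lt_card (S.mem_xR.2 hy)

lemma dualIdem_mul_adj_mul_dualIdem_of_pnum_eq_one [LinearOrder X] {i s j : Fin (d + 1)}
    (hki : S.k i = 2) (hkj : S.k j = 2) (h : S.pnum i s j = 1) :
    S.dualIdem R x i * S.adj R s * S.dualIdem R x j = S.matchingBlock R x i j ∨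
      S.dualIdem R x i * S.adj R s * S.dualIdem R x j =
        S.allOnesBlock R x i j - S.matchingBlock R x i j := by
  obtain ⟨z₀, hz₀, key⟩ := S.exists_rel_iff_rankIn_of_pnum_eq_one x hki hkj h
  have := S.rankIn_xR_lt_two x hkj (S.mem_xR.1 hz₀)
  rcases (show (S.xR x j).rankIn z₀ = 0 ∨ (S.xR x j).rankIn z₀ = 1 by omega) with h₀ | h₀
  · left
    ext y z
    simp only [dualIdem_mul_adj_mul_dualIdem_apply, matchingBlock, of_apply]
    refine if_congr (and_congr_right fun hy => and_congr_right fun hz => ?_) rfl rfl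
    have := S.rankIn_xR_lt_two x hki hy
    have := S.rankIn_xR_lt_two x hkj hz
    rw [key y (S.mem_xR.2 hy) z (S.mem_xR.2 hz)]
    omega
  · right
    ext y z
    simp only [dualIdem_mul_adj_mul_dualIdem_apply, matchingBlock, allOnesBlock,
      Matrix.sub_apply, of_apply]
    by_cases hyz : (x, y) ∈ S.rel i ∧ (x, z) ∈ S.rel j
    · obtain ⟨hy, hz⟩ := hyz
      have := S.rankIn_xR_lt_two x hki hy
      have := S.rankIn_xR_lt_two x hkj hz
      have hiff : (y, z) ∈ S.rel s ↔ (S.xR x i).rankIn y ≠ (S.xR x j).rankIn z := by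
        rw [key y (S.mem_xR.2 hy) z (S.mem_xR.2 hz)]
        omega
      simp only [hy, hz, hiff, true_and, if_true]
      split_ifs <;> simp_all
    · rw [if_neg fun h => hyz ⟨h.1, h.2.1⟩, if_neg hyz, if_neg fun h => hyz ⟨h.1, h.2.1⟩,
        sub_zero]

lemma pnum_eq_zero_or_eq_k_or_eq_one (hqt : ∀ i, S.k i ≤ 2) (i s j : Fin (d + 1)) :
    S.pnum i s j = 0 ∨ S.pnum i s j = S.k i ∨
      (S.k i = 2 ∧ S.k j = 2 ∧ S.pnum i s j = 1) := by
  by_contra! hne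
  have := S.pnum_le_k i s j
  have := hqt i
  have hki : S.k i = 2 := by omega
  have h₁ : S.pnum i s j = 1 := by omega
  have hsym := S.k_mul_pnum i s j
  rw [hki, h₁] at hsym
  have := S.k_pos j
  have := hqt j
  exact hne.2.2 hki (by omega) h₁

lemma matchingBlock_mem_terwilliger_of_pnum_eq_one [LinearOrder X] {i s j : Fin (d + 1)}
    (hki : S.k i = 2) (hkj : S.k j = 2) (h : S.pnum i s j = 1) :
    S.matchingBlock R x i j ∈ S.terwilliger R x := by
  have hmem := S.dualIdem_mul_adj_mul_dualIdem_mem_terwilliger R x i s j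
  rcases S.dualIdem_mul_adj_mul_dualIdem_of_pnum_eq_one R x hki hkj h with h' | h'
  · exact h' ▸ hmem
  · rw [← sub_sub_cancel (S.allOnesBlock R x i j) (S.matchingBlock R x i j), ← h']
    exact sub_mem (S.allOnesBlock_mem_terwilliger R x i j) hmem

lemma matchingBlock_mem_terwilliger_of_sim [LinearOrder X] {i j : Fin (d + 1)}
    (h : S.sim i j) : S.matchingBlock R x i j ∈ S.terwilliger R x := by
  obtain ⟨hki, hkj, h₂ | ⟨n, i', j', l, rfl, rfl, hchain, -, hlink⟩⟩ := h
  · obtain ⟨s, hs⟩ := (S.cardProd_transp_eq_two_iff hki j).1 h₂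
    exact S.matchingBlock_mem_terwilliger_of_pnum_eq_one R x hki hkj hs
  · suffices ∀ b, S.matchingBlock R x (i' 0) (l b) ∈ S.terwilliger R x from this (Fin.last n)
    intro b
    induction b using Fin.induction with
    | zero =>
      obtain ⟨h₁, h₂, h₃⟩ := hchain 0
      exact S.matchingBlock_mem_terwilliger_of_pnum_eq_one R x h₁ h₂ h₃
    | succ b ih =>
      obtain ⟨h₁, h₂, h₃⟩ := hchain b.succ
      have hk : S.k (i' 0) = S.k (l b.castSucc) := (hchain 0).1.trans (hchain b.castSucc).2.1.symm
      have hprod := S.matchingBlock_mul_matchingBlock R x hk (i' b.succ) (l b.succ)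
      rw [if_pos (hlink b)] at hprod
      exact hprod ▸ mul_mem ih (S.matchingBlock_mem_terwilliger_of_pnum_eq_one R x h₁ h₂ h₃)

end Blocks

section Classes

variable {X : Type} [Fintype X] [DecidableEq X] {d : ℕ} (S : AssocScheme X d)

structure IsSimClasses {r : ℕ} (C : Fin (r + 1) → Finset (Fin (d + 1))) : Prop where
  zero_eq : C 0 = univ
  existsUnique_mem : ∀ i, S.k i = 2 → ∃! l : Fin (r + 1), l ≠ 0 ∧ i ∈ C l
  mem_iff_sim : ∀ l, l ≠ 0 → ∀ i ∈ C l, ∀ j, j ∈ C l ↔ S.sim i j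

namespace IsSimClasses

variable {S} {r : ℕ} {C : Fin (r + 1) → Finset (Fin (d + 1))}

lemma mem_zero (hC : S.IsSimClasses C) (i : Fin (d + 1)) : i ∈ C 0 := hC.zero_eq ▸ mem_univ i

lemma k_eq_two (hC : S.IsSimClasses C) {l : Fin (r + 1)} (hl : l ≠ 0) {i : Fin (d + 1)}
    (hi : i ∈ C l) : S.k i = 2 :=
  ((hC.mem_iff_sim l hl i hi i).1 hi).1

lemma eq_of_mem (hC : S.IsSimClasses C) {l w : Fin (r + 1)} (hl : l ≠ 0) (hw : w ≠ 0)
    {i : Fin (d + 1)} (hil : i ∈ C l) (hiw : i ∈ C w) : l = w :=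
  (hC.existsUnique_mem i (hC.k_eq_two hl hil)).unique ⟨hl, hil⟩ ⟨hw, hiw⟩

lemma exists_of_sim (hC : S.IsSimClasses C) {i j : Fin (d + 1)} (h : S.sim i j) :
    ∃ l ≠ 0, i ∈ C l ∧ j ∈ C l := by
  obtain ⟨l, ⟨hl, hi⟩, -⟩ := hC.existsUnique_mem i h.1
  exact ⟨l, hl, hi, (hC.mem_iff_sim l hl i hi j).2 h⟩

end IsSimClasses

end Classes

section CellularBasis

variable {X : Type} [Fintype X] [DecidableEq X] [LinearOrder X] {d : ℕ} (S : AssocScheme X d)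
  (K : Type) [Field K] (x : X) {r : ℕ} {C : Fin (r + 1) → Finset (Fin (d + 1))}

lemma bElem_zero (i j : Fin (d + 1)) :
    S.bElem K x (0 : Fin (r + 1)) i j = S.allOnesBlock K x i j := by
  rw [bElem, if_pos rfl, allOnesBlock]

lemma bElem_of_ne_zero {l : Fin (r + 1)} (hl : l ≠ 0) (i j : Fin (d + 1)) :
    S.bElem K x l i j = S.matchingBlock K x i j := by
  rw [bElem, if_neg hl, matchingBlock]
  rfl

lemma bElem_transpose (l : Fin (r + 1)) (i j : Fin (d + 1)) :
    (S.bElem K x l i j)ᵀ = S.bElem K x l j i := by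
  rcases eq_or_ne l 0 with rfl | hl
  · simp only [bElem_zero, allOnesBlock_transpose]
  · simp only [bElem_of_ne_zero S K x hl, matchingBlock_transpose]

lemma bElem_mem_terwilliger (hC : S.IsSimClasses C) {l : Fin (r + 1)} {i j : Fin (d + 1)}
    (hi : i ∈ C l) (hj : j ∈ C l) : S.bElem K x l i j ∈ S.terwilliger K x := by
  rcases eq_or_ne l 0 with rfl | hl
  · exact S.bElem_zero K x i j ▸ S.allOnesBlock_mem_terwilliger K x i j
  · exact S.bElem_of_ne_zero K x hl i j ▸
      S.matchingBlock_mem_terwilliger_of_sim K x ((hC.mem_iff_sim l hl i hi j).1 hj)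

lemma bElem_zero_mul_bElem_zero (i j u v : Fin (d + 1)) :
    S.bElem K x (0 : Fin (r + 1)) u v * S.bElem K x (0 : Fin (r + 1)) i j =
      if v = i then (S.k v : K) • S.bElem K x (0 : Fin (r + 1)) u j else 0 := by
  simp only [bElem_zero, allOnesBlock_mul_allOnesBlock]

lemma bElem_zero_mul_bElem (hC : S.IsSimClasses C) {l : Fin (r + 1)} (hl : l ≠ 0)
    {u v i j : Fin (d + 1)} (hi : i ∈ C l) (hj : j ∈ C l) :
    S.bElem K x (0 : Fin (r + 1)) u v * S.bElem K x l i j =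
      if v = i then S.bElem K x (0 : Fin (r + 1)) u j else 0 := by
  rw [bElem_zero, bElem_zero, bElem_of_ne_zero S K x hl, allOnesBlock_mul_matchingBlock S K x
    ((hC.k_eq_two hl hi).trans (hC.k_eq_two hl hj).symm)]

lemma bElem_mul_bElem_zero (hC : S.IsSimClasses C) {w : Fin (r + 1)} (hw : w ≠ 0)
    {u v i j : Fin (d + 1)} (hu : u ∈ C w) (hv : v ∈ C w) :
    S.bElem K x w u v * S.bElem K x (0 : Fin (r + 1)) i j =
      if v = i then S.bElem K x (0 : Fin (r + 1)) u j else 0 := by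
  rw [bElem_zero, bElem_zero, bElem_of_ne_zero S K x hw, matchingBlock_mul_allOnesBlock S K x
    ((hC.k_eq_two hw hu).trans (hC.k_eq_two hw hv).symm)]

lemma bElem_mul_bElem_of_ne_zero (hC : S.IsSimClasses C) {w l : Fin (r + 1)} (hw : w ≠ 0)
    (hl : l ≠ 0) {u v i j : Fin (d + 1)} (hu : u ∈ C w) (hv : v ∈ C w) :
    S.bElem K x w u v * S.bElem K x l i j = if v = i then S.bElem K x l u j else 0 := by
  rw [bElem_of_ne_zero S K x hw, bElem_of_ne_zero S K x hl, bElem_of_ne_zero S K x hl,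
    matchingBlock_mul_matchingBlock S K x ((hC.k_eq_two hw hu).trans (hC.k_eq_two hw hv).symm)]

def cellFamily (C : Fin (r + 1) → Finset (Fin (d + 1))) :
    (Σ l : Fin (r + 1), {i // i ∈ C l} × {j // j ∈ C l}) → Matrix X X K :=
  fun σ => S.bElem K x σ.1 σ.2.1 σ.2.2

def cellSpan (C : Fin (r + 1) → Finset (Fin (d + 1))) : Submodule K (Matrix X X K) :=
  span K (Set.range (S.cellFamily K x C))

lemma bElem_mem_cellSpan {l : Fin (r + 1)} {i j : Fin (d + 1)} (hi : i ∈ C l)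
    (hj : j ∈ C l) : S.bElem K x l i j ∈ S.cellSpan K x C :=
  subset_span ⟨⟨l, ⟨i, hi⟩, ⟨j, hj⟩⟩, rfl⟩

lemma allOnesBlock_mem_cellSpan (hC : S.IsSimClasses C) (i j : Fin (d + 1)) :
    S.allOnesBlock K x i j ∈ S.cellSpan K x C :=
  S.bElem_zero K x (r := r) i j ▸ S.bElem_mem_cellSpan K x (hC.mem_zero i) (hC.mem_zero j)

lemma matchingBlock_mem_cellSpan (hC : S.IsSimClasses C) {i j : Fin (d + 1)}
    (h : S.sim i j) : S.matchingBlock K x i j ∈ S.cellSpan K x C := by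
  obtain ⟨l, hl, hi, hj⟩ := hC.exists_of_sim h
  exact S.bElem_of_ne_zero K x hl i j ▸ S.bElem_mem_cellSpan K x hi hj

lemma dualIdem_mem_cellSpan (hC : S.IsSimClasses C) (hqt : ∀ i, S.k i ≤ 2)
    (i : Fin (d + 1)) : S.dualIdem K x i ∈ S.cellSpan K x C := by
  have := S.k_pos i
  rcases (show S.k i = 1 ∨ S.k i = 2 by have := hqt i; omega) with hk | hk
  · exact (S.dualIdem_eq_allOnesBlock K x hk).symm ▸ S.allOnesBlock_mem_cellSpan K x hC i i
  · obtain ⟨l, ⟨hl, hi⟩, -⟩ := hC.existsUnique_mem i hk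
    rw [dualIdem_eq_matchingBlock, ← S.bElem_of_ne_zero K x hl]
    exact S.bElem_mem_cellSpan K x hi hi

lemma dualIdem_mul_adj_mul_dualIdem_mem_cellSpan (hC : S.IsSimClasses C)
    (hqt : ∀ i, S.k i ≤ 2) (i s j : Fin (d + 1)) :
    S.dualIdem K x i * S.adj K s * S.dualIdem K x j ∈ S.cellSpan K x C := by
  rcases S.pnum_eq_zero_or_eq_k_or_eq_one hqt i s j with h | h | ⟨hki, hkj, h⟩
  · exact (S.dualIdem_mul_adj_mul_dualIdem_of_pnum_eq_zero K x h) ▸ zero_mem _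
  · exact (S.dualIdem_mul_adj_mul_dualIdem_of_pnum_eq_k K x h) ▸
      S.allOnesBlock_mem_cellSpan K x hC i j
  · have hsim : S.sim i j :=
      ⟨hki, hkj, Or.inl ((S.cardProd_transp_eq_two_iff hki j).2 ⟨s, h⟩)⟩
    have hP := S.matchingBlock_mem_cellSpan K x hC hsim
    rcases S.dualIdem_mul_adj_mul_dualIdem_of_pnum_eq_one K x hki hkj h with h' | h' <;> rw [h']
    · exact hP
    · exact sub_mem (S.allOnesBlock_mem_cellSpan K x hC i j) hP

lemma cellFamily_mul_mem_cellSpan (hC : S.IsSimClasses C)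
    (σ τ : Σ l : Fin (r + 1), {i // i ∈ C l} × {j // j ∈ C l}) :
    S.cellFamily K x C σ * S.cellFamily K x C τ ∈ S.cellSpan K x C := by
  obtain ⟨w, ⟨u, hu⟩, ⟨v, hv⟩⟩ := σ
  obtain ⟨l, ⟨i, hi⟩, ⟨j, hj⟩⟩ := τ
  simp only [cellFamily]
  rcases eq_or_ne w 0 with rfl | hw <;> rcases eq_or_ne l 0 with rfl | hl
  · rw [bElem_zero_mul_bElem_zero]
    split_ifs
    · exact smul_mem _ _ (S.bElem_mem_cellSpan K x (hC.mem_zero u) (hC.mem_zero j))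
    · exact zero_mem _
  · rw [S.bElem_zero_mul_bElem K x hC hl hi hj]
    split_ifs
    · exact S.bElem_mem_cellSpan K x (hC.mem_zero u) (hC.mem_zero j)
    · exact zero_mem _
  · rw [S.bElem_mul_bElem_zero K x hC hw hu hv]
    split_ifs
    · exact S.bElem_mem_cellSpan K x (hC.mem_zero u) (hC.mem_zero j)
    · exact zero_mem _
  · rw [S.bElem_mul_bElem_of_ne_zero K x hC hw hl hu hv]
    split_ifs with hvi
    · subst hvi
      exact S.bElem_mem_cellSpan K x (hC.eq_of_mem hw hl hv hi ▸ hu) hj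
    · exact zero_mem _

lemma mul_mem_cellSpan (hC : S.IsSimClasses C) {a b : Matrix X X K}
    (ha : a ∈ S.cellSpan K x C) (hb : b ∈ S.cellSpan K x C) :
    a * b ∈ S.cellSpan K x C := by
  have : S.cellSpan K x C * S.cellSpan K x C ≤ S.cellSpan K x C := by
    rw [cellSpan, span_mul_span, span_le]
    rintro _ ⟨_, ⟨σ, rfl⟩, _, ⟨τ, rfl⟩, rfl⟩
    exact S.cellFamily_mul_mem_cellSpan K x hC σ τ
  exact this (mul_mem_mul ha hb)

lemma toSubmodule_terwilliger_eq_cellSpan (hC : S.IsSimClasses C)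
    (hqt : ∀ i, S.k i ≤ 2) :
    Subalgebra.toSubmodule (S.terwilliger K x) = S.cellSpan K x C := by
  refine le_antisymm (fun a ha => ?_) (span_le.2 ?_)
  · have hone : (1 : Matrix X X K) ∈ S.cellSpan K x C :=
      S.sum_dualIdem K x ▸ sum_mem fun i _ => S.dualIdem_mem_cellSpan K x hC hqt i
    refine (Algebra.adjoin_le ?_ : S.terwilliger K x ≤
      (S.cellSpan K x C).toSubalgebra hone fun _ _ => S.mul_mem_cellSpan K x hC) ha
    rintro _ (⟨s, rfl⟩ | ⟨i, rfl⟩)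
    · rw [SetLike.mem_coe, mem_toSubalgebra, adj_eq_sum S K x]
      exact sum_mem fun i _ => sum_mem fun j _ =>
        S.dualIdem_mul_adj_mul_dualIdem_mem_cellSpan K x hC hqt i s j
    · exact S.dualIdem_mem_cellSpan K x hC hqt i
  · rintro _ ⟨⟨l, ⟨i, hi⟩, ⟨j, hj⟩⟩, rfl⟩
    exact S.bElem_mem_terwilliger K x hC hi hj

lemma bElem_apply_of_not_mem {l : Fin (r + 1)} {i j : Fin (d + 1)} {y z : X}
    (h : ¬((x, y) ∈ S.rel i ∧ (x, z) ∈ S.rel j)) : S.bElem K x l i j y z = 0 := by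
  unfold bElem
  split_ifs <;> simp only [of_apply] <;> rw [if_neg] <;> tauto

lemma bElem_zero_apply {i j : Fin (d + 1)} {y z : X} (hy : (x, y) ∈ S.rel i)
    (hz : (x, z) ∈ S.rel j) : S.bElem K x (0 : Fin (r + 1)) i j y z = 1 := by
  simp [bElem, hy, hz]

lemma bElem_apply_of_ne_zero {l : Fin (r + 1)} (hl : l ≠ 0) {i j : Fin (d + 1)} {y z : X}
    (hy : (x, y) ∈ S.rel i) (hz : (x, z) ∈ S.rel j) :
    S.bElem K x l i j y z = if (S.xR x i).rankIn y = (S.xR x j).rankIn z then 1 else 0 := by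
  simp [bElem_of_ne_zero S K x hl, matchingBlock, hy, hz]

/-- The coordinate functional dual to `b^ℓ_{ij}`. -/
def cellCoord (l : Fin (r + 1)) (i j : Fin (d + 1)) : Module.Dual K (Matrix X X K) :=
  let y := (S.xR x i).min' (S.xR_nonempty x i)
  let z := (S.xR x j).min' (S.xR_nonempty x j)
  let z' := (S.xR x j).max' (S.xR_nonempty x j)
  if l = 0 then entryLinearMap K K y z' else entryLinearMap K K y z - entryLinearMap K K y z'

lemma cellCoord_bElem_self (hC : S.IsSimClasses C) {l : Fin (r + 1)} {i j : Fin (d + 1)}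
    (hj : j ∈ C l) : S.cellCoord K x l i j (S.bElem K x l i j) = 1 := by
  have hy := S.mem_xR.1 ((S.xR x i).min'_mem (S.xR_nonempty x i))
  have hz := S.mem_xR.1 ((S.xR x j).min'_mem (S.xR_nonempty x j))
  have hz' := S.mem_xR.1 ((S.xR x j).max'_mem (S.xR_nonempty x j))
  rcases eq_or_ne l 0 with rfl | hl
  · simp only [cellCoord, if_true, entryLinearMap_apply]
    exact S.bElem_zero_apply K x (r := r) hy hz'
  · have hcard : 1 < #(S.xR x j) := by rw [card_xR, hC.k_eq_two hl hj]; omega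
    simp only [cellCoord, if_neg hl, LinearMap.sub_apply, entryLinearMap_apply,
      S.bElem_apply_of_ne_zero K x hl hy hz, S.bElem_apply_of_ne_zero K x hl hy hz', rankIn_min',
      if_pos, if_neg (rankIn_max'_ne_zero hcard).symm, sub_zero]

lemma cellCoord_bElem_of_ne (hC : S.IsSimClasses C) {l w : Fin (r + 1)} {i j u v : Fin (d + 1)}
    (hi : i ∈ C l) (hu : u ∈ C w) (hv : v ∈ C w) (h : ¬(l = w ∧ u = i ∧ v = j)) :
    S.cellCoord K x l i j (S.bElem K x w u v) = 0 := by
  have hy := S.mem_xR.1 ((S.xR x i).min'_mem (S.xR_nonempty x i))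
  have hz := S.mem_xR.1 ((S.xR x j).min'_mem (S.xR_nonempty x j))
  have hz' := S.mem_xR.1 ((S.xR x j).max'_mem (S.xR_nonempty x j))
  by_cases huv : u = i ∧ v = j
  · obtain ⟨rfl, rfl⟩ := huv
    have hlw : l ≠ w := fun e => h ⟨e, rfl, rfl⟩
    rcases eq_or_ne l 0 with rfl | hl <;> rcases eq_or_ne w 0 with rfl | hw
    · exact absurd rfl hlw
    · have hcard : 1 < #(S.xR x v) := by rw [card_xR, hC.k_eq_two hw hv]; omega
      simp only [cellCoord, if_true, entryLinearMap_apply, S.bElem_apply_of_ne_zero K x hw hy hz',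
        rankIn_min', if_neg (rankIn_max'_ne_zero hcard).symm]
    · simp only [cellCoord, if_neg hl, LinearMap.sub_apply, entryLinearMap_apply,
        S.bElem_zero_apply K x hy hz, S.bElem_zero_apply K x hy hz', sub_self]
    · exact absurd (hC.eq_of_mem hl hw hi hu) hlw
  · have hvanish :
        ∀ z ∈ S.xR x j, S.bElem K x w u v ((S.xR x i).min' (S.xR_nonempty x i)) z = 0 :=
      fun z hz => S.bElem_apply_of_not_mem K x fun ⟨h₁, h₂⟩ =>
        huv ⟨S.eq_of_mem_rel h₁ hy, S.eq_of_mem_rel h₂ (S.mem_xR.1 hz)⟩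
    unfold cellCoord
    split_ifs <;> simp [hvanish _ (min'_mem _ _), hvanish _ (max'_mem _ _)]

lemma linearIndependent_cellFamily (hC : S.IsSimClasses C) :
    LinearIndependent K (S.cellFamily K x C) := by
  refine .of_pairwise_dual_eq_zero_one _ (fun σ => S.cellCoord K x σ.1 σ.2.1 σ.2.2) ?_ ?_
  · rintro ⟨l, ⟨i, hi⟩, ⟨j, hj⟩⟩ ⟨w, ⟨u, hu⟩, ⟨v, hv⟩⟩ hne
    refine S.cellCoord_bElem_of_ne K x hC hi hu hv fun h => hne ?_
    obtain ⟨rfl, rfl, rfl⟩ : l = w ∧ u = i ∧ v = j := h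
    rfl
  · rintro ⟨l, ⟨i, hi⟩, ⟨j, hj⟩⟩
    exact S.cellCoord_bElem_self K x hC hj

/-- The matrices `a` satisfying axiom (C3) on the cell `ℓ`. -/
def cellularMultipliers (C : Fin (r + 1) → Finset (Fin (d + 1))) (l : Fin (r + 1)) :
    Submodule K (Matrix X X K) where
  carrier := {a | ∃ f : Fin (d + 1) → Fin (d + 1) → K, ∀ i ∈ C l, ∀ j ∈ C l,
    ∃ s ∈ span K {m | ∃ u v : Fin (d + 1), m = S.bElem K x (0 : Fin (r + 1)) u v},
      a * S.bElem K x l i j = ∑ u ∈ C l, f u i • S.bElem K x l u j + s ∧ (l = 0 → s = 0)}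
  zero_mem' := ⟨0, fun _ _ _ _ => ⟨0, zero_mem _, by simp, fun _ => rfl⟩⟩
  add_mem' := by
    rintro a b ⟨f, hf⟩ ⟨g, hg⟩
    refine ⟨f + g, fun i hi j hj => ?_⟩
    obtain ⟨s, hs, hs_eq, hs0⟩ := hf i hi j hj
    obtain ⟨t, ht, ht_eq, ht0⟩ := hg i hi j hj
    refine ⟨s + t, add_mem hs ht, ?_, fun h => by rw [hs0 h, ht0 h, add_zero]⟩
    simp only [add_mul, hs_eq, ht_eq, Pi.add_apply, add_smul, sum_add_distrib]
    abel
  smul_mem' := by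
    rintro c a ⟨f, hf⟩
    refine ⟨c • f, fun i hi j hj => ?_⟩
    obtain ⟨s, hs, hs_eq, hs0⟩ := hf i hi j hj
    refine ⟨c • s, smul_mem _ c hs, ?_, fun h => by rw [hs0 h, smul_zero]⟩
    simp only [smul_mul_assoc, hs_eq, Pi.smul_apply, smul_eq_mul, mul_smul, smul_add, smul_sum]

lemma cellFamily_mem_cellularMultipliers (hC : S.IsSimClasses C) (l : Fin (r + 1))
    (σ : Σ l : Fin (r + 1), {i // i ∈ C l} × {j // j ∈ C l}) :
    S.cellFamily K x C σ ∈ S.cellularMultipliers K x C l := by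
  obtain ⟨w, ⟨u, hu⟩, ⟨v, hv⟩⟩ := σ
  change S.bElem K x w u v ∈ _
  rcases eq_or_ne w 0 with rfl | hw <;> rcases eq_or_ne l 0 with rfl | hl
  · refine ⟨fun u' i' => if u' = u ∧ v = i' then (S.k v : K) else 0,
      fun i _ j _ => ⟨0, zero_mem _, ?_, fun _ => rfl⟩⟩
    rw [sum_ite_and_smul _ _ (fun _ => hC.mem_zero u), add_zero]
    exact S.bElem_zero_mul_bElem_zero K x i j u v
  · refine ⟨0, fun i hi j hj =>
      ⟨if v = i then S.bElem K x (0 : Fin (r + 1)) u j else 0, ?_, ?_, fun h => absurd h hl⟩⟩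
    · split_ifs
      · exact subset_span ⟨u, j, rfl⟩
      · exact zero_mem _
    · rw [S.bElem_zero_mul_bElem K x hC hl hi hj]
      simp
  · refine ⟨fun u' i' => if u' = u ∧ v = i' then 1 else 0,
      fun i _ j _ => ⟨0, zero_mem _, ?_, fun _ => rfl⟩⟩
    rw [sum_ite_and_smul _ _ (fun _ => hC.mem_zero u), add_zero, one_smul]
    exact S.bElem_mul_bElem_zero K x hC hw hu hv
  · refine ⟨fun u' i' => if u' = u ∧ v = i' then 1 else 0,
      fun i hi j _ => ⟨0, zero_mem _, ?_, fun h => absurd h hl⟩⟩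
    rw [sum_ite_and_smul _ _ (fun h => hC.eq_of_mem hw hl hv (h ▸ hi) ▸ hu), add_zero,
      one_smul]
    exact S.bElem_mul_bElem_of_ne_zero K x hC hw hl hu hv

lemma exists_basis_terwilliger (hC : S.IsSimClasses C) (hqt : ∀ i, S.k i ≤ 2) :
    ∃ bb : Module.Basis (Σ l : Fin (r + 1), {i // i ∈ C l} × {j // j ∈ C l}) K
      (S.terwilliger K x), ∀ σ, (bb σ : Matrix X X K) = S.cellFamily K x C σ := by
  have hT : span K (Set.range (S.cellFamily K x C)) =
      Subalgebra.toSubmodule (S.terwilliger K x) :=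
    (S.toSubmodule_terwilliger_eq_cellSpan K x hC hqt).symm
  exact ⟨(Module.Basis.span (S.linearIndependent_cellFamily K x hC)).map
    (LinearEquiv.ofEq _ _ hT), fun σ => by simp; rfl⟩

lemma toSubmodule_terwilliger_le_cellularMultipliers (hC : S.IsSimClasses C)
    (hqt : ∀ i, S.k i ≤ 2) (l : Fin (r + 1)) :
    Subalgebra.toSubmodule (S.terwilliger K x) ≤ S.cellularMultipliers K x C l := by
  rw [S.toSubmodule_terwilliger_eq_cellSpan K x hC hqt, cellSpan, span_le]
  exact Set.range_subset_iff.2 (S.cellFamily_mem_cellularMultipliers K x hC l)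

end CellularBasis

end AssocScheme

theorem terwilliger_quasiThin_cellular_general
    {X : Type} [Fintype X] [DecidableEq X] [LinearOrder X] {d : ℕ}
    (S : AssocScheme X d) (K : Type) [Field K] (x : X)
    (hqt : ∀ i, S.k i ≤ 2)
    (r : ℕ) (C : Fin (r + 1) → Finset (Fin (d + 1)))
    (hC0 : C 0 = Finset.univ)
    (hCpart : ∀ i : Fin (d + 1), S.k i = 2 → ∃! l : Fin (r + 1), l ≠ 0 ∧ i ∈ C l)
    (hCclass : ∀ l, l ≠ 0 → ∀ i ∈ C l, ∀ j, j ∈ C l ↔ S.sim i j)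
 :
    -- (C1) : the `b^ℓ_{ij}` (for `ℓ ∈ I`, `i, j ∈ M(ℓ) = C_ℓ`) form a basis of `T`
    (∃ bb : Module.Basis (Σ l : Fin (r + 1), {i // i ∈ C l} × {j // j ∈ C l}) K
        ↥(S.terwilliger K x),
      ∀ s : Σ l : Fin (r + 1), {i // i ∈ C l} × {j // j ∈ C l}, ((bb s : ↥(S.terwilliger K x)) : Matrix X X K) =
        S.bElem K x s.1 s.2.1.1 s.2.2.1) ∧
    -- (C2) : matrix transpose is an involution of `T` with `t(b^ℓ_{ij}) = b^ℓ_{ji}`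
    (∀ M ∈ S.terwilliger K x, Matrix.transpose M ∈ S.terwilliger K x) ∧
    (∀ M N : Matrix X X K,
      Matrix.transpose (M * N) = Matrix.transpose N * Matrix.transpose M) ∧
    (∀ M : Matrix X X K, Matrix.transpose (Matrix.transpose M) = M) ∧
    (∀ (l : Fin (r + 1)) (i j : Fin (d + 1)), i ∈ C l → j ∈ C l →
      Matrix.transpose (S.bElem K x l i j) = S.bElem K x l j i) ∧
    -- (C3) : `a · b^ℓ_{ij} = ∑_{u ∈ C_ℓ} r_a(u, i) b^ℓ_{uj} + r'` with `r_a(u, i)`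
    -- independent of `j`, and `r'` a linear combination of the `b^0_{uv}`
    -- (basis elements of strictly smaller index; for `ℓ = 0`, `r' = 0`)
    (∃ ra : Fin (r + 1) → ↥(S.terwilliger K x) → Fin (d + 1) → Fin (d + 1) → K,
      ∀ (a : ↥(S.terwilliger K x)) (l : Fin (r + 1)) (i j : Fin (d + 1)),
        i ∈ C l → j ∈ C l →
        ∃ s ∈ Submodule.span K
            {m : Matrix X X K | ∃ u v : Fin (d + 1),
              m = S.bElem K x (0 : Fin (r + 1)) u v},
          (a : Matrix X X K) * S.bElem K x l i j =
            (∑ u ∈ C l, ra l a u i • S.bElem K x l u j) + s ∧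
          (l = 0 → s = 0)) := by
  have hC : S.IsSimClasses C := ⟨hC0, hCpart, hCclass⟩
  choose ra hra using fun l (a : S.terwilliger K x) =>
    S.toSubmodule_terwilliger_le_cellularMultipliers K x hC hqt l a.2
  exact ⟨S.exists_basis_terwilliger K x hC hqt, fun M hM => S.transpose_mem_terwilliger K x hM,
    Matrix.transpose_mul, Matrix.transpose_transpose, fun l i j _ _ => S.bElem_transpose K x l i j,
    ra, fun a l i j hi hj => hra l a i hi j hj⟩

/-- The Terwilliger algebra of a quasi-thin association scheme is cellular with
respect to matrix transpose, with cell datum `I = {0, 1, …, r}` ordered by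
`0 < 1, …, 0 < r` (`1, …, r` pairwise incomparable), `M(ℓ) = C_ℓ` and cellular
basis `{b^ℓ_{ij}}`. -/
theorem terwilliger_quasiThin_cellular
    {X : Type} [Fintype X] [DecidableEq X] [LinearOrder X] {d : ℕ}
    (S : AssocScheme X d) (K : Type) [Field K] (x : X)
    (hqt : ∀ i, S.k i ≤ 2)
    (r : ℕ) (C : Fin (r + 1) → Finset (Fin (d + 1)))
    (hC0 : C 0 = Finset.univ)
    (hCne : ∀ l, l ≠ 0 → (C l).Nonempty)
    (hCpart : ∀ i : Fin (d + 1), S.k i = 2 → ∃! l : Fin (r + 1), l ≠ 0 ∧ i ∈ C l)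
    (hCclass : ∀ l, l ≠ 0 → ∀ i ∈ C l, ∀ j, j ∈ C l ↔ S.sim i j)
 :
    -- (C1) : the `b^ℓ_{ij}` (for `ℓ ∈ I`, `i, j ∈ M(ℓ) = C_ℓ`) form a basis of `T`
    (∃ bb : Module.Basis (Σ l : Fin (r + 1), {i // i ∈ C l} × {j // j ∈ C l}) K
        ↥(S.terwilliger K x),
      ∀ s : Σ l : Fin (r + 1), {i // i ∈ C l} × {j // j ∈ C l}, ((bb s : ↥(S.terwilliger K x)) : Matrix X X K) =
        S.bElem K x s.1 s.2.1.1 s.2.2.1) ∧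
    -- (C2) : matrix transpose is an involution of `T` with `t(b^ℓ_{ij}) = b^ℓ_{ji}`
    (∀ M ∈ S.terwilliger K x, Matrix.transpose M ∈ S.terwilliger K x) ∧
    (∀ M N : Matrix X X K,
      Matrix.transpose (M * N) = Matrix.transpose N * Matrix.transpose M) ∧
    (∀ M : Matrix X X K, Matrix.transpose (Matrix.transpose M) = M) ∧
    (∀ (l : Fin (r + 1)) (i j : Fin (d + 1)), i ∈ C l → j ∈ C l →
      Matrix.transpose (S.bElem K x l i j) = S.bElem K x l j i) ∧
    -- (C3) : `a · b^ℓ_{ij} = ∑_{u ∈ C_ℓ} r_a(u, i) b^ℓ_{uj} + r'` with `r_a(u, i)`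
    -- independent of `j`, and `r'` a linear combination of the `b^0_{uv}`
    -- (basis elements of strictly smaller index; for `ℓ = 0`, `r' = 0`)
    (∃ ra : Fin (r + 1) → ↥(S.terwilliger K x) → Fin (d + 1) → Fin (d + 1) → K,
      ∀ (a : ↥(S.terwilliger K x)) (l : Fin (r + 1)) (i j : Fin (d + 1)),
        i ∈ C l → j ∈ C l →
        ∃ s ∈ Submodule.span K
            {m : Matrix X X K | ∃ u v : Fin (d + 1),
              m = S.bElem K x (0 : Fin (r + 1)) u v},
          (a : Matrix X X K) * S.bElem K x l i j =
            (∑ u ∈ C l, ra l a u i • S.bElem K x l u j) + s ∧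
          (l = 0 → s = 0)) :=
  terwilliger_quasiThin_cellular_general S K x hqt r C hC0 hCpart hCclass
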